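/- arXiv:math/0505565 — 5 statements merged into one kernel-verified Lean document; each statement's English description precedes it below -/
import Mathlib

section
/- Let G be a group and H a subgroup of G of finite index, and let X be a subset of H. Then X is separable as a subset of H if and only if X is separable as a subset of G. (Equivalently, the profinite topology of H coincides with the subspace topology induced on H by the profinite topology of G.) -/
/-- A subset `X` of a group `G` is separable if for every `g ∉ X` there is a
homomorphism `π` to a finite group `Q` with `π g ∉ π '' X`. -/
def IsSeparableSubset {G : Type*} [Group G] (X : Set G) : Prop :=
  ∀ g : G, g ∉ X → ∃ (Q : Type) (_ : Group Q) (_ : Finite Q) (π : G →* Q),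
    π g ∉ (⇑π) '' X

/-- Any quotient of `G` by a finite-index normal subgroup gives a separating
homomorphism landing in `Type 0`. -/
noncomputable def quotHomToType0 {G : Type*} [Group G] (N : Subgroup G) [N.Normal]
    [N.FiniteIndex] : G →* Shrink.{0} (G ⧸ N) :=
  ((Shrink.mulEquiv.{0, _} (α := G ⧸ N)).symm.toMonoidHom).comp (QuotientGroup.mk' N)

theorem quotHomToType0_eq_iff {G : Type*} [Group G] (N : Subgroup G) [N.Normal]
    [N.FiniteIndex] {a b : G} :
    quotHomToType0 N a = quotHomToType0 N b ↔ a⁻¹ * b ∈ N := by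
  rw [quotHomToType0]
  constructor
  · intro h
    have := (Shrink.mulEquiv.{0, _} (α := G ⧸ N)).symm.injective h
    exact (QuotientGroup.eq ..).mp this
  · intro h
    exact congrArg (⇑(Shrink.mulEquiv.{0, _} (α := G ⧸ N)).symm)
      ((QuotientGroup.eq ..).mpr h : (QuotientGroup.mk' N) _ = _)

/-- For a finite-index subgroup `H ≤ G` and `X ⊆ H`, `X` is separable in `H`
iff it is separable (as the corresponding subset) in `G`. -/
theorem separable_in_subgroup_iff_separable_in_group
    {G : Type*} [Group G] (H : Subgroup G) [H.FiniteIndex] (X : Set H) :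
    IsSeparableSubset X ↔ IsSeparableSubset (((↑) : H → G) '' X) := by
  constructor
  · intro hsep g hg
    by_cases hgH : g ∈ H
    · -- g ∈ H, separate inside H then push to a quotient of G
      have hgX : (⟨g, hgH⟩ : H) ∉ X := fun hx => hg ⟨⟨g, hgH⟩, hx, rfl⟩
      obtain ⟨Q, _, _, φ, hφ⟩ := hsep ⟨g, hgH⟩ hgX
      have hker : φ.ker.FiniteIndex := Subgroup.finiteIndex_ker φ
      set K : Subgroup G := φ.ker.map H.subtype with hK
      have hKfi : K.FiniteIndex := by
        constructor
        rw [hK, Subgroup.index_map_subtype]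
        exact Nat.mul_ne_zero hker.index_ne_zero Subgroup.FiniteIndex.index_ne_zero
      set N := K.normalCore with hN
      have : N.FiniteIndex := Subgroup.finiteIndex_normalCore K
      refine ⟨Shrink.{0} (G ⧸ N), inferInstance, inferInstance, quotHomToType0 N, ?_⟩
      rintro ⟨-, ⟨x, hx, rfl⟩, hxg⟩
      have hmem : (x : G)⁻¹ * g ∈ N := (quotHomToType0_eq_iff N).mp hxg
      have hmemK : (x : G)⁻¹ * g ∈ K := K.normalCore_le hmem
      obtain ⟨y, hy, hyeq⟩ := hmemK
      have : φ x = φ ⟨g, hgH⟩ := by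
        have hxy : (x : H) * y = ⟨g, hgH⟩ := by
          apply Subtype.ext
          simp only [Subgroup.coe_mul]
          rw [show (y : G) = (x : G)⁻¹ * g from hyeq]
          group
        rw [← hxy, map_mul, hy, mul_one]
      exact hφ ⟨x, hx, this⟩
    · -- g ∉ H, separate using the normal core of H
      have : H.normalCore.FiniteIndex := Subgroup.finiteIndex_normalCore H
      refine ⟨Shrink.{0} (G ⧸ H.normalCore), inferInstance, inferInstance,
        quotHomToType0 H.normalCore, ?_⟩
      rintro ⟨-, ⟨x, hx, rfl⟩, hxg⟩
      have hmem : (x : G)⁻¹ * g ∈ H.normalCore :=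
        (quotHomToType0_eq_iff H.normalCore).mp hxg
      have : g ∈ H := by
        have h1 := H.normalCore_le hmem
        have h2 := H.mul_mem x.2 h1
        simpa using h2
      exact hgH this
  · intro hsep g hg
    have hg' : (g : G) ∉ ((↑) : H → G) '' X := by
      rintro ⟨x, hx, hxg⟩
      exact hg (by rwa [show x = g from Subtype.ext hxg] at hx)
    obtain ⟨Q, _, _, π, hπ⟩ := hsep g hg'
    refine ⟨Q, ‹_›, ‹_›, π.comp H.subtype, ?_⟩
    rintro ⟨x, hx, hxg⟩
    exact hπ ⟨x, ⟨x, hx, rfl⟩, hxg⟩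
end

section
/- Let G be a group, S a normal subgroup of G, and t ∈ G such that G is generated by S together with t. Let φ be the automorphism of S given by φ(s) = t⁻¹st. Then for every g ∈ S, the conjugacy class of t·g in G equals the set {t · φ(x)⁻¹ · g · x : x ∈ S}, i.e. it equals t · [g]_φ. -/
/-- If `G = ⟨S, t⟩` with `S` normal and `φ` is conjugation by `t` on `S`,
then the conjugacy class of `t * g` in `G` is `t • [g]_φ`. -/
theorem conjClass_eq_twisted
    {G : Type*} [Group G] (S : Subgroup G) [S.Normal] (t : G)
    (hgen : Subgroup.closure ((S : Set G) ∪ {t}) = ⊤)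
    (φ : MulAut S) (hφ : ∀ s : S, (↑(φ s) : G) = t⁻¹ * s * t) (g : S) :
    {y : G | ∃ w : G, w⁻¹ * (t * g) * w = y} =
      {y : G | ∃ x : S, y = t * (↑(φ x) : G)⁻¹ * g * x} := by
  -- rewrite RHS form: t * φ(x)⁻¹ * g * x = x⁻¹ * (t*g) * x
  have key : ∀ x : S, t * (↑(φ x) : G)⁻¹ * ↑g * ↑x = (↑x)⁻¹ * (t * ↑g) * ↑x := by
    intro x
    rw [hφ x]
    group
  set c : G → Prop := fun u => ∃ x : S, u = (↑x)⁻¹ * (t * ↑g) * ↑x with hc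
  ext y
  simp only [Set.mem_setOf_eq]
  constructor
  · rintro ⟨w, rfl⟩
    have hw : w ∈ Subgroup.closure ((S : Set G) ∪ {t}) := by rw [hgen]; exact trivial
    have main : ∀ u, c u → c (w⁻¹ * u * w) ∧ c (w * u * w⁻¹) := by
      refine Subgroup.closure_induction
        (p := fun v _ => ∀ u, c u → c (v⁻¹ * u * v) ∧ c (v * u * v⁻¹)) ?_ ?_ ?_ ?_ hw
      · rintro s (hs | hs) u ⟨x, rfl⟩
        · -- s ∈ S
          refine ⟨⟨x * ⟨s, hs⟩, ?_⟩, ⟨x * ⟨s, hs⟩⁻¹, ?_⟩⟩ <;>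
            simp only [Subgroup.coe_mul, Subgroup.coe_inv] <;> group
        · -- s = t
          rcases hs with rfl
          constructor
          · refine ⟨g⁻¹ * φ x, ?_⟩
            have h1 := hφ x
            simp only [Subgroup.coe_mul, Subgroup.coe_inv, h1]
            group
          · refine ⟨φ.symm (g * x), ?_⟩
            have h1 := hφ (φ.symm (g * x))
            rw [MulEquiv.apply_symm_apply] at h1
            rw [Subgroup.coe_mul] at h1
            have h2 : (↑(φ.symm (g * x)) : G) = s * (↑g * ↑x) * s⁻¹ := by
              rw [h1]; group
            rw [h2]
            group
      · intro u hu
        constructor <;> simpa using hu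
      · intro a b _ _ ha hb u hu
        constructor
        · have := (hb (a⁻¹ * u * a) (ha u hu).1).1
          rw [show b⁻¹ * (a⁻¹ * u * a) * b = (a * b)⁻¹ * u * (a * b) by group] at this
          exact this
        · have := (ha (b * u * b⁻¹) (hb u hu).2).2
          rw [show a * (b * u * b⁻¹) * a⁻¹ = (a * b) * u * (a * b)⁻¹ by group] at this
          exact this
      · intro a _ ha u hu
        refine ⟨?_, ?_⟩
        · have := (ha u hu).2
          rw [show a * u * a⁻¹ = (a⁻¹)⁻¹ * u * a⁻¹ by group] at this
          exact this
        · have := (ha u hu).1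
          rw [show a⁻¹ * u * a = a⁻¹ * u * (a⁻¹)⁻¹ by group] at this
          exact this
    obtain ⟨x, hx⟩ := (main (t * ↑g) ⟨1, by simp⟩).1
    exact ⟨x, by rw [key x, hx]⟩
  · rintro ⟨x, rfl⟩
    exact ⟨x, by rw [key x]⟩
end

section
/- Let G be a group, S a normal subgroup of G of finite index, and t ∈ G such that G is generated by S together with t. Let φ be the automorphism of S given by φ(s) = t⁻¹st. If G is conjugacy separable, then for every g ∈ S the twisted-φ conjugacy class [g]_φ is a separable subset of S. -/
/-- A group is conjugacy separable if any two non-conjugate elements remain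
non-conjugate in some finite quotient. -/
def ConjugacySeparable (G : Type*) [Group G] : Prop :=
  ∀ a b : G, ¬ IsConj a b → ∃ (Q : Type) (_ : Group Q) (_ : Finite Q) (π : G →* Q),
    ¬ IsConj (π a) (π b)

/-- The twisted-`φ` conjugacy class of `g`: the set `{φ(x)⁻¹ * g * x : x ∈ S}`. -/
def twistedConjClass {S : Type*} [Group S] (φ : MulAut S) (g : S) : Set S :=
  { y | ∃ x : S, y = (φ x)⁻¹ * g * x }

/-- If `G = ⟨S, t⟩` with `S` normal of finite index, `φ` is conjugation by `t`
on `S`, and `G` is conjugacy separable, then every twisted-`φ` conjugacy class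
is a separable subset of `S`. -/
theorem twistedConjClass_separable_of_conjugacySeparable
    {G : Type*} [Group G] (S : Subgroup G) [S.Normal] [S.FiniteIndex] (t : G)
    (hgen : Subgroup.closure ((S : Set G) ∪ {t}) = ⊤)
    (φ : MulAut S) (hφ : ∀ s : S, (↑(φ s) : G) = t⁻¹ * s * t)
    (hG : ConjugacySeparable G) (g : S) :
    IsSeparableSubset (twistedConjClass φ g) := by
  intro h hh
  have hφ' : ∀ s : S, ((φ⁻¹ s : S) : G) = t * s * t⁻¹ := by
    intro s
    have h1 := hφ (φ⁻¹ s)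
    rw [MulAut.apply_inv_self] at h1
    rw [h1]; group
  -- Every G-conjugate of t*g is an S-conjugate of t*g.
  have key : ∀ v : G, ∃ u : S, v⁻¹ * (t * ↑g) * v = (u : G)⁻¹ * (t * ↑g) * u := by
    intro v
    have hv : v ∈ Subgroup.closure ((S : Set G) ∪ {t}) := by rw [hgen]; trivial
    have main : (∀ w : S, ∃ u : S, v⁻¹ * ((w : G)⁻¹ * (t * ↑g) * w) * v
          = (u : G)⁻¹ * (t * ↑g) * u)
        ∧ (∀ w : S, ∃ u : S, v * ((w : G)⁻¹ * (t * ↑g) * w) * v⁻¹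
          = (u : G)⁻¹ * (t * ↑g) * u) := by
      induction hv using Subgroup.closure_induction with
      | mem x hx =>
        rcases hx with hx | hx
        · refine ⟨fun w => ⟨w * ⟨x, hx⟩, ?_⟩, fun w => ⟨w * ⟨x, hx⟩⁻¹, ?_⟩⟩ <;>
            push_cast <;> group
        · rcases hx with rfl
          constructor
          · intro w
            refine ⟨g⁻¹ * φ w, ?_⟩
            push_cast [hφ]
            group
          · intro w
            refine ⟨φ⁻¹ g * φ⁻¹ w, ?_⟩
            push_cast [hφ']
            group
      | one => exact ⟨fun w => ⟨w, by group⟩, fun w => ⟨w, by group⟩⟩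
      | mul x y hx hy px py =>
        constructor
        · intro w
          obtain ⟨u1, hu1⟩ := px.1 w
          obtain ⟨u2, hu2⟩ := py.1 u1
          refine ⟨u2, ?_⟩
          rw [← hu2, ← hu1]; group
        · intro w
          obtain ⟨u1, hu1⟩ := py.2 w
          obtain ⟨u2, hu2⟩ := px.2 u1
          refine ⟨u2, ?_⟩
          rw [← hu2, ← hu1]; group
      | inv x hx px =>
        simp only [inv_inv]
        exact ⟨px.2, px.1⟩
    obtain ⟨u, hu⟩ := main.1 1
    refine ⟨u, ?_⟩
    simpa using hu
  -- t*g and t*h are not conjugate in G.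
  have hnc : ¬ IsConj ((t * g : G)) ((t * h : G)) := by
    intro hc
    rw [isConj_iff] at hc
    obtain ⟨c, hc⟩ := hc
    obtain ⟨u, hu⟩ := key c⁻¹
    apply hh
    refine ⟨u, ?_⟩
    have heq : (t * h : G) = (u : G)⁻¹ * (t * ↑g) * u := by
      rw [← hu, ← hc]; group
    apply Subtype.ext
    have : (h : G) = t⁻¹ * ((u : G)⁻¹ * (t * ↑g) * u) := by rw [← heq]; group
    rw [this]
    push_cast [hφ]
    group
  obtain ⟨Q, _, _, π, hπ⟩ := hG _ _ hnc
  refine ⟨Q, ‹_›, ‹_›, π.comp S.subtype, ?_⟩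
  rintro ⟨y, ⟨x, rfl⟩, hy⟩
  apply hπ
  rw [isConj_iff]
  refine ⟨π ((x : G)⁻¹), ?_⟩
  have hy' : π ((((φ x)⁻¹ * g * x : S) : G)) = π (h : G) := hy
  have h2 : ((((φ x)⁻¹ * g * x : S) : G)) = t⁻¹ * ((x : G)⁻¹ * (t * ↑g) * x) := by
    push_cast [hφ]; group
  have h3 : π ((t * h : G)) = π ((x : G)⁻¹ * (t * ↑g) * x) := by
    rw [map_mul, ← hy', h2, ← map_mul]
    congr 1
    group
  rw [h3, map_mul, map_mul, map_mul, map_mul, map_inv]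
  group
end

section
/- Let G be a group which has S as a normal subgroup of finite index. Suppose that for every virtually inner automorphism φ of S, every twisted-φ conjugacy class in S is a separable subset of S. Then G is conjugacy separable. -/
/-- An automorphism is virtually inner if some positive power of it is inner. -/
def VirtuallyInner {S : Type*} [Group S] (φ : MulAut S) : Prop :=
  ∃ n : ℕ, 1 ≤ n ∧ ∃ a : S, ∀ s : S, (φ ^ n) s = a⁻¹ * s * a

/-- If `S` is a finite-index normal subgroup of `G` and all twisted conjugacy
classes of `S` (for virtually inner automorphisms) are separable, then `G` is
conjugacy separable. -/
theorem conjugacySeparable_of_twisted_separable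
    {G : Type*} [Group G] (S : Subgroup G) [S.Normal] [S.FiniteIndex]
    (hsep : ∀ φ : MulAut S, VirtuallyInner φ →
      ∀ g : S, IsSeparableSubset (twistedConjClass φ g)) :
    ConjugacySeparable G := by
  classical
  intro a b hab
  -- the automorphism of S given by conjugation by a⁻¹
  set ψ : MulAut S := MulAut.conjNormal a⁻¹ with hψdef
  have hψapp : ∀ x : S, ((ψ x : S) : G) = a⁻¹ * x * a := by
    intro x
    simp [hψdef, MulAut.conjNormal_apply]
  -- ψ is virtually inner
  have hψVI : VirtuallyInner ψ := by
    refine ⟨S.index, Nat.one_le_iff_ne_zero.mpr Subgroup.FiniteIndex.index_ne_zero,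
      ⟨a ^ S.index, S.pow_index_mem a⟩, ?_⟩
    intro s
    have hpow : (ψ ^ S.index) = MulAut.conjNormal (a⁻¹ ^ S.index) := by
      rw [hψdef, ← map_pow]
    rw [hpow]
    ext
    push_cast [MulAut.conjNormal_apply]
    rw [inv_pow]
    group
  set T : Set S := twistedConjClass ψ 1 with hTdef
  have hT : IsSeparableSubset T := hsep ψ hψVI 1
  -- choose a separating finite-index subgroup for each coset
  have key : ∀ c : G ⧸ S, ∃ N : Subgroup S, N.FiniteIndex ∧
      ∀ hc : a⁻¹ * c.out * b * c.out⁻¹ ∈ S,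
        (⟨a⁻¹ * c.out * b * c.out⁻¹, hc⟩ : S) ∉ T →
        ∀ (y m : S), m ∈ N →
          (⟨a⁻¹ * c.out * b * c.out⁻¹, hc⟩ : S) ≠ (ψ y)⁻¹ * m * y := by
    intro c
    by_cases hc : a⁻¹ * c.out * b * c.out⁻¹ ∈ S
    · by_cases hs : (⟨a⁻¹ * c.out * b * c.out⁻¹, hc⟩ : S) ∈ T
      · exact ⟨⊤, inferInstance, fun _ hs' => absurd hs hs'⟩
      · obtain ⟨Q, _, _, π, hπ⟩ := hT _ hs
        refine ⟨π.ker, inferInstance, ?_⟩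
        intro hc' hs' y m hm heq
        apply hπ
        refine ⟨(ψ y)⁻¹ * y, ⟨y, by group⟩, ?_⟩
        have h1 : π ((⟨a⁻¹ * c.out * b * c.out⁻¹, hc⟩ : S)) = π ((ψ y)⁻¹ * m * y) := by
          rw [heq]
        have h2 : π m = 1 := MonoidHom.mem_ker.mp hm
        rw [h1]; simp [map_mul, h2]
    · exact ⟨⊤, inferInstance, fun hc' => absurd hc' hc⟩
  choose N hNfin hNsep using key
  -- the finite-index normal subgroup M of G
  have hcore : ∀ c : G ⧸ S, (((N c).map S.subtype).normalCore).FiniteIndex := by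
    intro c
    haveI : ((N c).map S.subtype).FiniteIndex := by
      constructor
      rw [Subgroup.index_map_subtype]
      exact Nat.mul_ne_zero (hNfin c).index_ne_zero Subgroup.FiniteIndex.index_ne_zero
    infer_instance
  haveI hinf : (⨅ c : G ⧸ S, ((N c).map S.subtype).normalCore).FiniteIndex :=
    Subgroup.finiteIndex_iInf hcore
  set M : Subgroup G := S ⊓ ⨅ c : G ⧸ S, ((N c).map S.subtype).normalCore with hMdef
  haveI hMfin : M.FiniteIndex := by rw [hMdef]; infer_instance
  haveI hMnorm : M.Normal := by
    constructor
    intro n hn g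
    rw [hMdef, Subgroup.mem_inf] at hn ⊢
    refine ⟨‹S.Normal›.conj_mem _ hn.1 g, ?_⟩
    rw [Subgroup.mem_iInf]
    intro c
    exact (Subgroup.normalCore_normal _).conj_mem _ (Subgroup.mem_iInf.mp hn.2 c) g
  -- the images of a and b are not conjugate in G ⧸ M
  have main : ¬ IsConj ((QuotientGroup.mk' M) a) ((QuotientGroup.mk' M) b) := by
    intro hconj
    obtain ⟨q, hq⟩ := isConj_iff.mp hconj.symm
    obtain ⟨g, rfl⟩ := QuotientGroup.mk'_surjective M q
    have hm : a⁻¹ * (g * b * g⁻¹) ∈ M := by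
      refine (QuotientGroup.eq (s := M)).mp ?_
      have : ((g * b * g⁻¹ : G) : G ⧸ M) = ((a : G) : G ⧸ M) := by
        simpa [QuotientGroup.mk'_apply, ← QuotientGroup.mk_mul, ← QuotientGroup.mk_inv] using hq
      exact this.symm
    set m : G := a⁻¹ * (g * b * g⁻¹) with hmdef
    have hmS : m ∈ S := (Subgroup.mem_inf.mp hm).1
    set c : G ⧸ S := QuotientGroup.mk g with hcdef
    set r : G := c.out with hrdef
    have hrg : r⁻¹ * g ∈ S := by
      refine (QuotientGroup.eq (s := S)).mp ?_
      rw [hrdef]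
      exact Quotient.out_eq c
    have hx : g * r⁻¹ ∈ S := by
      have := ‹S.Normal›.conj_mem _ hrg r
      simpa [mul_assoc] using this
    set x : G := g * r⁻¹ with hxdef
    have hgxr : g = x * r := by rw [hxdef]; group
    -- a⁻¹ * r * b * r⁻¹ ∈ S
    have hcond : a⁻¹ * r * b * r⁻¹ = (a⁻¹ * x⁻¹ * a) * m * x := by
      rw [hmdef, hgxr]; group
    have hc : a⁻¹ * r * b * r⁻¹ ∈ S := by
      rw [hcond]
      exact S.mul_mem (S.mul_mem (by simpa [mul_assoc] using ‹S.Normal›.conj_mem _ (S.inv_mem hx) a⁻¹) hmS) hx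
    by_cases hs : (⟨a⁻¹ * r * b * r⁻¹, hc⟩ : S) ∈ T
    · -- then a and b are conjugate in G, contradiction
      obtain ⟨y, hy⟩ := hs
      have hyG : a⁻¹ * r * b * r⁻¹ = a⁻¹ * (y : G)⁻¹ * a * y := by
        have := congrArg (fun z : S => (z : G)) hy
        simpa [hψapp y, mul_assoc] using this
      apply hab
      refine (isConj_iff.mpr ⟨(y : G) * r, ?_⟩).symm
      have : r * b * r⁻¹ = (y : G)⁻¹ * a * y := by
        have := congrArg (fun z => a * z) hyG
        simpa [mul_assoc] using this
      calc (y : G) * r * b * ((y : G) * r)⁻¹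
          = (y : G) * (r * b * r⁻¹) * (y : G)⁻¹ := by group
        _ = a := by rw [this]; group
    · -- then the separating quotient gives a contradiction
      have hmN : (⟨m, hmS⟩ : S) ∈ N c := by
        have hm2 : m ∈ ((N c).map S.subtype).normalCore :=
          Subgroup.mem_iInf.mp (Subgroup.mem_inf.mp hm).2 c
        obtain ⟨m₀, hm₀, hm₀eq⟩ := Subgroup.normalCore_le _ hm2
        have : m₀ = (⟨m, hmS⟩ : S) := Subtype.ext hm₀eq
        rwa [← this]
      refine hNsep c hc hs ⟨x, hx⟩ ⟨m, hmS⟩ hmN ?_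
      ext
      push_cast [hψapp]
      rw [hcond]
      group
  -- shrink G ⧸ M to a Type 0 group
  let eM : Shrink.{0} (G ⧸ M) ≃* (G ⧸ M) := Shrink.mulEquiv
  refine ⟨Shrink.{0} (G ⧸ M), inferInstance, Finite.of_equiv _ eM.symm.toEquiv,
    eM.symm.toMonoidHom.comp (QuotientGroup.mk' M), ?_⟩
  intro h
  apply main
  have := eM.toMonoidHom.map_isConj h
  simpa using this
end

section
/- Let Γ be a group and h ∈ Γ an element of infinite order such that for every x ∈ Γ, x⁻¹hx = h or x⁻¹hx = h⁻¹. Then for every g ∈ Γ there exist integers λ and λ₀ such that for every integer n, g is conjugate to g·hⁿ in Γ if and only if there exists an integer k with n = kλ or n = kλ + λ₀. -/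
/-- If `h` has infinite order and every conjugate of `h` is `h` or `h⁻¹`, then
for each `g` there are integers `lam`, `lam0` such that `g` is conjugate to
`g * h ^ n` iff `n = k * lam` or `n = k * lam + lam0` for some integer `k`. -/
theorem conjugate_powers_classification
    {Γ : Type*} [Group Γ] (h : Γ)
    (hinf : ∀ n : ℤ, h ^ n = 1 → n = 0)
    (hconj : ∀ x : Γ, x⁻¹ * h * x = h ∨ x⁻¹ * h * x = h⁻¹) (g : Γ) :
    ∃ lam lam0 : ℤ, ∀ n : ℤ,
      (∃ x : Γ, x⁻¹ * g * x = g * h ^ n) ↔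
        ∃ k : ℤ, n = k * lam ∨ n = k * lam + lam0 := by
  classical
  -- conjugation of a power
  have key : ∀ (x : Γ) (n : ℤ), x⁻¹ * h ^ n * x = (x⁻¹ * h * x) ^ n := by
    intro x n
    have := map_zpow (MulAut.conj x⁻¹) h n
    simpa [MulAut.conj_apply, mul_assoc] using this
  -- S : exponents witnessed by an element centralizing h
  let S : AddSubgroup ℤ :=
    { carrier := {n : ℤ | ∃ x : Γ, x⁻¹ * h * x = h ∧ x⁻¹ * g * x = g * h ^ n}
      zero_mem' := ⟨1, by simp⟩
      add_mem' := by
        rintro a b ⟨x, hx1, hx2⟩ ⟨y, hy1, hy2⟩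
        refine ⟨x * y, ?_, ?_⟩
        · have : (x * y)⁻¹ * h * (x * y) = y⁻¹ * (x⁻¹ * h * x) * y := by group
          rw [this, hx1, hy1]
        · calc (x * y)⁻¹ * g * (x * y) = y⁻¹ * (x⁻¹ * g * x) * y := by group
            _ = y⁻¹ * (g * h ^ a) * y := by rw [hx2]
            _ = (y⁻¹ * g * y) * (y⁻¹ * h ^ a * y) := by group
            _ = (g * h ^ b) * (y⁻¹ * h * y) ^ a := by rw [hy2, key]
            _ = g * h ^ (a + b) := by rw [hy1, mul_assoc, ← zpow_add, add_comm]
      neg_mem' := by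
        rintro a ⟨x, hx1, hx2⟩
        have hx1' : x * h * x⁻¹ = h := by
          have := congrArg (fun z => x * z * x⁻¹) hx1
          simpa [mul_assoc] using this.symm
        have hpow : x * h ^ a * x⁻¹ = h ^ a := by
          have := key x⁻¹ a
          simpa [hx1'] using this
        have e2 : x * (g * h ^ a) * x⁻¹ = g := by rw [← hx2]; group
        have e3 : (x * g * x⁻¹) * h ^ a = g := by
          calc (x * g * x⁻¹) * h ^ a = (x * g * x⁻¹) * (x * h ^ a * x⁻¹) := by
                rw [hpow]
            _ = x * (g * h ^ a) * x⁻¹ := by group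
            _ = g := e2
        refine ⟨x⁻¹, by simpa using hx1', ?_⟩
        have := eq_mul_inv_of_mul_eq e3
        simpa [zpow_neg] using this }
  obtain ⟨lam, hlam⟩ := Int.subgroup_cyclic S
  have memS : ∀ n : ℤ, n ∈ S ↔ ∃ k : ℤ, n = k * lam := by
    intro n
    rw [hlam, AddSubgroup.mem_closure_singleton]
    constructor
    · rintro ⟨k, hk⟩; exact ⟨k, by simpa [smul_eq_mul, eq_comm] using hk⟩
    · rintro ⟨k, hk⟩; exact ⟨k, by simpa [smul_eq_mul, eq_comm] using hk⟩
  have memS' : ∀ n : ℤ, n ∈ S →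
      ∃ x : Γ, x⁻¹ * h * x = h ∧ x⁻¹ * g * x = g * h ^ n := fun n hn => hn
  by_cases hb : ∃ (m : ℤ) (x : Γ), x⁻¹ * h * x = h⁻¹ ∧ x⁻¹ * g * x = g * h ^ m
  · -- some conjugator inverts h
    obtain ⟨lam0, x0, h01, h02⟩ := hb
    have hinv0 : x0⁻¹ * h⁻¹ * x0 = h := by
      have : x0⁻¹ * h⁻¹ * x0 = (x0⁻¹ * h * x0)⁻¹ := by group
      rw [this, h01, inv_inv]
    refine ⟨lam, lam0, fun n => ⟨?_, ?_⟩⟩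
    · rintro ⟨x, hx⟩
      rcases hconj x with hx1 | hx1
      · obtain ⟨k, hk⟩ := (memS n).1 ⟨x, hx1, hx⟩
        exact ⟨k, Or.inl hk⟩
      · -- lam0 - n ∈ S via witness x * x0
        have hmem : (lam0 - n) ∈ S := by
          refine ⟨x * x0, ?_, ?_⟩
          · have : (x * x0)⁻¹ * h * (x * x0) = x0⁻¹ * (x⁻¹ * h * x) * x0 := by group
            rw [this, hx1, hinv0]
          · calc (x * x0)⁻¹ * g * (x * x0) = x0⁻¹ * (x⁻¹ * g * x) * x0 := by group
              _ = x0⁻¹ * (g * h ^ n) * x0 := by rw [hx]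
              _ = (x0⁻¹ * g * x0) * (x0⁻¹ * h ^ n * x0) := by group
              _ = (g * h ^ lam0) * (x0⁻¹ * h * x0) ^ n := by rw [h02, key]
              _ = (g * h ^ lam0) * h ^ (-n) := by rw [h01]; simp [zpow_neg, inv_zpow]
              _ = g * h ^ (lam0 - n) := by
                  rw [mul_assoc, ← zpow_add, sub_eq_add_neg]
        obtain ⟨k, hk⟩ := (memS _).1 hmem
        exact ⟨-k, Or.inr (by linarith)⟩
    · rintro ⟨k, hk | hk⟩
      · obtain ⟨x, _, hx⟩ := memS' n ((memS n).2 ⟨k, hk⟩)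
        exact ⟨x, hx⟩
      · -- witness y for -(k*lam), then y * x0
        obtain ⟨y, hy1, hy2⟩ := memS' _ ((memS _).2 ⟨-k, by ring⟩ :
          (-(k * lam)) ∈ S)
        refine ⟨y * x0, ?_⟩
        calc (y * x0)⁻¹ * g * (y * x0) = x0⁻¹ * (y⁻¹ * g * y) * x0 := by group
          _ = x0⁻¹ * (g * h ^ (-(k * lam))) * x0 := by rw [hy2]
          _ = (x0⁻¹ * g * x0) * (x0⁻¹ * h ^ (-(k * lam)) * x0) := by group
          _ = (g * h ^ lam0) * (x0⁻¹ * h * x0) ^ (-(k * lam)) := by rw [h02, key]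
          _ = (g * h ^ lam0) * h ^ (k * lam) := by rw [h01]; simp [zpow_neg, inv_zpow]
          _ = g * h ^ n := by rw [mul_assoc, ← zpow_add, hk, add_comm]
  · -- every conjugator centralizes h
    refine ⟨lam, 0, fun n => ⟨?_, ?_⟩⟩
    · rintro ⟨x, hx⟩
      rcases hconj x with hx1 | hx1
      · obtain ⟨k, hk⟩ := (memS n).1 ⟨x, hx1, hx⟩
        exact ⟨k, Or.inl hk⟩
      · exact absurd ⟨n, x, hx1, hx⟩ hb
    · rintro ⟨k, hk | hk⟩
      · obtain ⟨x, _, hx⟩ := memS' n ((memS n).2 ⟨k, hk⟩)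
        exact ⟨x, hx⟩
      · obtain ⟨x, _, hx⟩ := memS' n ((memS n).2 ⟨k, by simpa using hk⟩)
        exact ⟨x, hx⟩
end
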